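/- Second step of the IHT support theorem: let A have the (2k, δ_{2k})-RIP (norm version), x ∈ 𝒮^p_{η,k,r} with ‖x|_{S_r(x)ᶜ}‖₂ ≤ η and ‖A‖ ≤ 1, and let v ∈ ℝ^N be k-sparse with ‖Av − Ax‖₂ ≤ √τ/β(A). If √τ < (r − η/(1−δ_{2k}))/(1 + 1/((1−δ_{2k})β(A))), then for every index i, |(x|_{S_r(x)})_i − v_i| ≤ √τ/(β(A)(1−δ_{2k})) + η/(1−δ_{2k}) < r − √τ. -/

import Mathlib

open Finset

/-- ℓ¹ norm of a vector. -/
noncomputable def l1 {N : ℕ} (x : Fin N → ℝ) : ℝ := ∑ i, |x i|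

/-- ℓ² norm of a vector. -/
noncomputable def l2 {n : ℕ} (x : Fin n → ℝ) : ℝ := Real.sqrt (∑ i, (x i) ^ 2)

/-- Restriction of a vector to an index set (zero off the set). -/
noncomputable def restr {N : ℕ} (Λ : Finset (Fin N)) (x : Fin N → ℝ) : Fin N → ℝ :=
  fun i => if i ∈ Λ then x i else 0

/-- Support of a vector as a finset. -/
noncomputable def supp {N : ℕ} (z : Fin N → ℝ) : Finset (Fin N) :=
  univ.filter (fun i => z i ≠ 0)

/-- Null Space Property of order `k` with constant `γ`. -/
def NSP {m N : ℕ} (A : Matrix (Fin m) (Fin N) ℝ) (k : ℕ) (γ : ℝ) : Prop :=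
  ∀ z : Fin N → ℝ, A.mulVec z = 0 → ∀ Λ : Finset (Fin N), Λ.card ≤ k →
    l1 (restr Λ z) ≤ γ * l1 (restr Λᶜ z)

/-- Restricted Isometry Property of order `K` with constant `δ` (norm version). -/
noncomputable def RIP {m N : ℕ} (A : Matrix (Fin m) (Fin N) ℝ) (K : ℕ) (δ : ℝ) : Prop :=
  ∀ z : Fin N → ℝ, (supp z).card ≤ K →
    (1 - δ) * l2 z ≤ l2 (A.mulVec z) ∧ l2 (A.mulVec z) ≤ (1 + δ) * l2 z

/-- ℓ¹ best `k`-term approximation error. -/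
noncomputable def sigma1 {N : ℕ} (k : ℕ) (x : Fin N → ℝ) : ℝ :=
  sInf {t : ℝ | ∃ z : Fin N → ℝ, (supp z).card ≤ k ∧ t = l1 (x - z)}

/-- Index set of entries exceeding `r` in absolute value. -/
noncomputable def Sr {N : ℕ} (r : ℝ) (x : Fin N → ℝ) : Finset (Fin N) :=
  univ.filter (fun i => r < |x i|)

/-- The Hölder constant κ_p(N,k). -/
noncomputable def kappa (p : ℝ) (N k : ℕ) : ℝ :=
  if p = 1 then 1 else ((N - k : ℕ) : ℝ) ^ (1 - 1 / p)

/-- Membership in the class 𝒮^p_{η,k,r} of sparse vectors affected by bounded noise. -/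
noncomputable def inClass {N : ℕ} (p η : ℝ) (k : ℕ) (r : ℝ) (x : Fin N → ℝ) : Prop :=
  (Sr r x).card ≤ k ∧ ∑ i ∈ (Sr r x)ᶜ, |x i| ^ p ≤ η ^ p

/-- Entrywise hard thresholding with threshold `t`. -/
noncomputable def hardThr {N : ℕ} (t : ℝ) (z : Fin N → ℝ) : Fin N → ℝ :=
  fun i => if t < |z i| then z i else 0

/-!
Write `w = x|_S - v` with `S = S_r(x)`. Both `x|_S` and `v` are `k`-sparse, so `w` is `2k`-sparse and
the lower RIP bound gives `(1 - δ) ‖w‖₂ ≤ ‖A w‖₂`. Since `x|_S = x - x|_{Sᶜ}`, we have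
`A w = -((A v - A x) + A x|_{Sᶜ})`, whose norm is at most `√τ/β + η` by the residual hypothesis and
`‖A‖ ≤ 1`. Every entry of `w` is bounded by `‖w‖₂`; the strict inequality is a rearrangement of the
hypothesis on `√τ`.
-/

section L2

variable {n : ℕ}

lemma l2_eq_norm_toLp (x : Fin n → ℝ) : l2 x = ‖WithLp.toLp 2 x‖ := by
  simp only [l2, EuclideanSpace.norm_eq, Real.norm_eq_abs, sq_abs]

lemma abs_le_l2 (x : Fin n → ℝ) (i : Fin n) : |x i| ≤ l2 x := by
  rw [l2, ← Real.sqrt_sq_eq_abs]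
  exact Real.sqrt_le_sqrt (single_le_sum (fun j _ => sq_nonneg (x j)) (mem_univ i))

lemma l2_add_le (x y : Fin n → ℝ) : l2 (x + y) ≤ l2 x + l2 y := by
  simp only [l2_eq_norm_toLp, WithLp.toLp_add]
  exact norm_add_le _ _

lemma l2_neg (x : Fin n → ℝ) : l2 (-x) = l2 x := by
  simp [l2]

end L2

section Support

variable {N : ℕ}

lemma supp_restr_subset (Λ : Finset (Fin N)) (x : Fin N → ℝ) : supp (restr Λ x) ⊆ Λ := by
  intro i hi
  by_contra h
  simp [supp, restr, h] at hi

lemma supp_sub_subset (x y : Fin N → ℝ) : supp (x - y) ⊆ supp x ∪ supp y := by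
  intro i hi
  by_contra h
  simp only [mem_union, not_or, supp, mem_filter, mem_univ, true_and, not_not] at h
  simp [supp, h.1, h.2] at hi

lemma card_supp_restr_sub_le (Λ : Finset (Fin N)) (x v : Fin N → ℝ) :
    (supp (restr Λ x - v)).card ≤ Λ.card + (supp v).card :=
  calc (supp (restr Λ x - v)).card ≤ (Λ ∪ supp v).card :=
        card_le_card ((supp_sub_subset _ _).trans (union_subset_union_left (supp_restr_subset _ _)))
    _ ≤ Λ.card + (supp v).card := card_union_le _ _

lemma restr_eq_sub_restr_compl (Λ : Finset (Fin N)) (x : Fin N → ℝ) :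
    restr Λ x = x - restr Λᶜ x := by
  funext i
  by_cases h : i ∈ Λ <;> simp [restr, h]

end Support

lemma RIP.l2_le_div {m N K : ℕ} {A : Matrix (Fin m) (Fin N) ℝ} {δ c : ℝ} (hRIP : RIP A K δ)
    (hδ : δ < 1) {z : Fin N → ℝ} (hz : (supp z).card ≤ K) (hAz : l2 (A.mulVec z) ≤ c) :
    l2 z ≤ c / (1 - δ) := by
  rw [le_div_iff₀ (sub_pos.mpr hδ), mul_comm]
  exact (hRIP z hz).1.trans hAz

lemma l2_restr_sub_le_of_RIP {m N k : ℕ} {A : Matrix (Fin m) (Fin N) ℝ} {δ ε η : ℝ}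
    (hRIP : RIP A (2 * k) δ) (hδ : δ < 1) {Λ : Finset (Fin N)} (hΛ : Λ.card ≤ k)
    {x v : Fin N → ℝ} (hv : (supp v).card ≤ k) (htail : l2 (A.mulVec (restr Λᶜ x)) ≤ η)
    (hres : l2 (A.mulVec v - A.mulVec x) ≤ ε) :
    l2 (restr Λ x - v) ≤ (ε + η) / (1 - δ) := by
  have hsparse : (supp (restr Λ x - v)).card ≤ 2 * k := by
    have := card_supp_restr_sub_le Λ x v
    omega
  have hA : A.mulVec (restr Λ x - v) = -((A.mulVec v - A.mulVec x) + A.mulVec (restr Λᶜ x)) := by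
    rw [restr_eq_sub_restr_compl Λ x, Matrix.mulVec_sub, Matrix.mulVec_sub]
    abel
  refine hRIP.l2_le_div hδ hsparse ?_
  rw [hA, l2_neg]
  exact (l2_add_le _ _).trans (add_le_add hres htail)

lemma div_add_div_lt_sub_of_lt {d β η r s : ℝ} (hd : 0 < d) (hβ : 0 < β)
    (hs : s < (r - η / d) / (1 + 1 / (d * β))) :
    s / (β * d) + η / d < r - s := by
  rw [lt_div_iff₀ (by positivity), mul_add, mul_one_div, mul_comm d β] at hs
  linarith

theorem stmt14_general {m N : ℕ} (A : Matrix (Fin m) (Fin N) ℝ) (k : ℕ)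
    (δ β η r τ : ℝ)
    (hRIP : RIP A (2 * k) δ) (hδ : δ < 1) (hβ : 0 < β)
    (hAnorm : ∀ z : Fin N → ℝ, l2 (A.mulVec z) ≤ l2 z)
    (x : Fin N → ℝ) (hcard : (Sr r x).card ≤ k)
    (htail2 : l2 (restr (Sr r x)ᶜ x) ≤ η)
    (v : Fin N → ℝ) (hv : (supp v).card ≤ k)
    (hres : l2 (A.mulVec v - A.mulVec x) ≤ Real.sqrt τ / β)
    (hτ2 : Real.sqrt τ < (r - η / (1 - δ)) / (1 + 1 / ((1 - δ) * β))) :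
    ∀ i : Fin N,
      |restr (Sr r x) x i - v i| ≤ Real.sqrt τ / (β * (1 - δ)) + η / (1 - δ) ∧
      Real.sqrt τ / (β * (1 - δ)) + η / (1 - δ) < r - Real.sqrt τ := by
  intro i
  have hl2 := l2_restr_sub_le_of_RIP hRIP hδ hcard hv ((hAnorm _).trans htail2) hres
  rw [add_div, div_div] at hl2
  exact ⟨(abs_le_l2 _ i).trans hl2, div_add_div_lt_sub_of_lt (sub_pos.mpr hδ) hβ hτ2⟩

theorem stmt14 {m N : ℕ} (A : Matrix (Fin m) (Fin N) ℝ) (k : ℕ)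
    (δ β η r τ : ℝ)
    (hRIP : RIP A (2 * k) δ) (hδ : δ < 1) (hβ : 0 < β) (hτ0 : 0 ≤ τ)
    (hη : 0 ≤ η)
    (hAnorm : ∀ z : Fin N → ℝ, l2 (A.mulVec z) ≤ l2 z)
    (x : Fin N → ℝ) (hcard : (Sr r x).card ≤ k)
    (htail2 : l2 (restr (Sr r x)ᶜ x) ≤ η)
    (v : Fin N → ℝ) (hv : (supp v).card ≤ k)
    (hres : l2 (A.mulVec v - A.mulVec x) ≤ Real.sqrt τ / β)
    (hτ2 : Real.sqrt τ < (r - η / (1 - δ)) / (1 + 1 / ((1 - δ) * β))) :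
    ∀ i : Fin N,
      |restr (Sr r x) x i - v i| ≤ Real.sqrt τ / (β * (1 - δ)) + η / (1 - δ) ∧
      Real.sqrt τ / (β * (1 - δ)) + η / (1 - δ) < r - Real.sqrt τ :=
  stmt14_general A k δ β η r τ hRIP hδ hβ hAnorm x hcard htail2 v hv hres hτ2
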